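/- arXiv:1603.06684 — 4 statements merged into one kernel-verified Lean document; each statement's English description precedes it below -/
import Mathlib

section
/- Let κ be an infinite cardinal. If the weak diamond principle Φ_{κ⁺} holds, then 2^κ < 2^{κ⁺}. -/
open Set Cardinal

/-- `C` is an unbounded subset of the ordinal `μ`. -/
def unboundedIn (μ : Ordinal) (C : Set Ordinal) : Prop :=
  ∀ x < μ, ∃ y ∈ C, x ≤ y ∧ y < μ

/-- `C` is closed in `μ`: every nonzero `x < μ` which is a limit of elements of `C`
belongs to `C`. -/
def closedIn (μ : Ordinal) (C : Set Ordinal) : Prop :=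
  ∀ x < μ, x ≠ 0 → (∀ y < x, ∃ z ∈ C, y ≤ z ∧ z < x) → x ∈ C

/-- `C` is a club (closed and unbounded) subset of `μ`. -/
def isClubIn (μ : Ordinal) (C : Set Ordinal) : Prop :=
  C ⊆ Iio μ ∧ closedIn μ C ∧ unboundedIn μ C

/-- `S` belongs to the club filter on `μ`: it is a subset of `μ` containing a club. -/
def inClubFilter (μ : Ordinal) (S : Set Ordinal) : Prop :=
  S ⊆ Iio μ ∧ ∃ C, isClubIn μ C ∧ C ⊆ S

/-- `S` is a stationary subset of `μ`: it meets every club of `μ`. -/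
def stationaryIn (μ : Ordinal) (S : Set Ordinal) : Prop :=
  ∀ C, isClubIn μ C → (S ∩ C).Nonempty

/-- The restriction `f ↾ α` of a binary sequence `f`, coded as the binary sequence
agreeing with `f` below `α` and vanishing from `α` onwards. -/
noncomputable def restrictSeq (f : Ordinal → Bool) (α : Ordinal) : Ordinal → Bool :=
  fun β => if β < α then f β else false

/-- The Devlin–Shelah weak diamond `Φ_μ`: for every colouring `F` of binary sequences
of length `< μ` (coded as pairs of a length `α` and a sequence, applied to the
restriction to `α`) there is a `g : μ → 2` which predicts `F` on a stationary set
for every binary sequence `f` of length `μ`. -/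
def weakDiamond (μ : Ordinal) : Prop :=
  ∀ F : Ordinal → (Ordinal → Bool) → Bool,
    ∃ g : Ordinal → Bool, ∀ f : Ordinal → Bool,
      stationaryIn μ {α | α < μ ∧ F α (restrictSeq f α) = g α}

private lemma weakDiamond_aux_mk (κ : Cardinal.{u}) :
    #(Iio κ.ord → Bool) = Cardinal.lift.{u+1} (2 ^ κ) := by
  rw [mk_arrow, Ordinal.mk_Iio_ordinal, Cardinal.card_ord, Cardinal.lift_power]
  simp

/-- If the weak diamond `Φ_{κ⁺}` holds for an infinite cardinal `κ`,
then `2 ^ κ < 2 ^ κ⁺`. -/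
theorem weakDiamond_succ_implies_two_pow_lt (κ : Cardinal) (hκ : ℵ₀ ≤ κ)
    (hwd : weakDiamond (Order.succ κ).ord) :
    (2 : Cardinal) ^ κ < (2 : Cardinal) ^ Order.succ κ := by
  set μ := (Order.succ κ).ord with hμ
  have hκμ : κ.ord < μ := Cardinal.ord_lt_ord.mpr (Order.lt_succ κ)
  by_contra hle
  have heq : (2 : Cardinal) ^ κ = 2 ^ Order.succ κ :=
    le_antisymm (power_le_power_left two_ne_zero (Order.lt_succ κ).le) (not_lt.mp hle)
  have hmk : #(Iio κ.ord → Bool) = #(Iio μ → Bool) := by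
    rw [weakDiamond_aux_mk, hμ, weakDiamond_aux_mk, heq]
  obtain ⟨e⟩ := Cardinal.eq.mp hmk
  set F : Ordinal → (Ordinal → Bool) → Bool :=
    fun α t => if h : α < μ then !(e (fun β => t β.1)) ⟨α, h⟩ else false with hF
  obtain ⟨g, hg⟩ := hwd F
  set a : Iio κ.ord → Bool := e.symm (fun β => g β.1) with ha
  set f : Ordinal → Bool := fun β => if h : β < κ.ord then a ⟨β, h⟩ else false with hf
  set C : Set Ordinal := {x | κ.ord ≤ x ∧ x < μ} with hC
  have hclub : isClubIn μ C := by
    refine ⟨fun x hx => hx.2, ?_, ?_⟩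
    · intro x hxμ hx0 hlim
      refine ⟨?_, hxμ⟩
      by_contra hlt
      push_neg at hlt
      obtain ⟨z, hzC, -, hzx⟩ := hlim 0 (pos_iff_ne_zero.mpr hx0)
      exact absurd (hzC.1.trans hzx.le) (not_le.mpr hlt)
    · intro x hx
      exact ⟨max x κ.ord, ⟨le_max_right _ _, max_lt hx hκμ⟩, le_max_left _ _,
        max_lt hx hκμ⟩
  obtain ⟨α, ⟨hαμ, hαeq⟩, hκα, -⟩ := hg f C hclub
  have hres : (fun β : Iio κ.ord => restrictSeq f α β.1) = a := by
    funext β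
    have hβα : β.1 < α := lt_of_lt_of_le β.2 hκα
    simp only [restrictSeq, hβα, if_pos, hf]
    have hβ : (β : Ordinal) < κ.ord := β.2
    rw [dif_pos hβ]
  have : F α (restrictSeq f α) = !(g α) := by
    rw [hF]
    simp only [dif_pos hαμ, hres, ha, Equiv.apply_symm_apply]
  rw [this] at hαeq
  exact Bool.not_ne_self (g α) hαeq
end

section
/- Let μ be a regular uncountable cardinal and let λ be a regular cardinal with λ > 2^{<μ}. Then for every family {C_α : α < λ} of subsets of μ there exists an ordinal α < λ such that for every ε < μ, the set H_{αε} = {β < λ : C_β ∩ ε = C_α ∩ ε} has cardinality λ. -/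
open Set Cardinal

/-- Galvin's basic observation: if `μ` is regular uncountable and `lam` is regular with
`lam > 2 ^ (< μ)`, then for every family `⟨C_α : α < lam⟩` of subsets of `μ` there is an
`α < lam` such that for every `ε < μ` the set
`H_{αε} = {β < lam : C_β ∩ ε = C_α ∩ ε}` has cardinality `lam`. -/
theorem exists_index_with_large_agreement (μ : Cardinal) (hreg : μ.IsRegular)
    (huncount : ℵ₀ < μ)
    (lam : Cardinal) (hlreg : lam.IsRegular) (hlam : (2 : Cardinal) ^< μ < lam)
    (C : Ordinal → Set Ordinal) (hC : ∀ β < lam.ord, C β ⊆ Iio μ.ord) :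
    ∃ α < lam.ord, ∀ ε < μ.ord,
      #{β : Ordinal | β < lam.ord ∧ C β ∩ Iio ε = C α ∩ Iio ε} =
        Cardinal.lift.{1, 0} lam := by
  set L := Cardinal.lift.{1, 0} lam with hLdef
  have hLreg : L.IsRegular := by
    constructor
    · exact aleph0_le_lift.mpr hlreg.1
    · rw [← lift_ord, ← Ordinal.lift_cof, hlreg.cof_eq]
  -- μ ≤ 2 ^< μ
  have hmu_le : μ ≤ 2 ^< μ := by
    by_contra h
    push_neg at h
    exact (cantor ((2:Cardinal) ^< μ)).not_ge (le_powerlt 2 h)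
  have hmul : μ < lam := lt_of_le_of_lt hmu_le hlam
  -- abbreviations
  set H : Ordinal → Ordinal → Set Ordinal :=
    fun α ε => {β | β < lam.ord ∧ C β ∩ Iio ε = C α ∩ Iio ε} with hHdef
  set Badε : Ordinal → Set Ordinal :=
    fun ε => {β | β < lam.ord ∧ #(H β ε) < L} with hBadεdef
  have hIio : #(Iio lam.ord) = L := by
    rw [Ordinal.mk_Iio_ordinal, Cardinal.card_ord]
  have badε_small : ∀ ε < μ.ord, #(Badε ε) < L := by
    intro ε hε
    set g : Ordinal → Set (Iio ε) := fun β => {x | (x : Ordinal) ∈ C β} with hgdef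
    have hg : ∀ γ δ : Ordinal, g γ = g δ → C γ ∩ Iio ε = C δ ∩ Iio ε := by
      intro γ δ h
      ext z
      constructor
      · rintro ⟨hz1, hz2⟩
        have : (⟨z, hz2⟩ : Iio ε) ∈ g γ := hz1
        rw [h] at this
        exact ⟨this, hz2⟩
      · rintro ⟨hz1, hz2⟩
        have : (⟨z, hz2⟩ : Iio ε) ∈ g δ := hz1
        rw [← h] at this
        exact ⟨this, hz2⟩
    set g' : ↥(Badε ε) → Set (Iio ε) := fun β => g β.1 with hg'def
    have hmk : #(Badε ε) = Cardinal.sum (fun s : Set (Iio ε) => #{x // g' x = s}) := by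
      rw [← Cardinal.mk_sigma]
      exact (Cardinal.mk_congr (Equiv.sigmaFiberEquiv g')).symm
    rw [hmk]
    apply Cardinal.sum_lt_of_isRegular hLreg
    · -- index set small
      have h1 : #(Set (Iio ε)) = 2 ^ Cardinal.lift.{1,0} ε.card := by
        rw [Cardinal.mk_set, Ordinal.mk_Iio_ordinal]
      have h2 : (2 : Cardinal.{1}) ^ Cardinal.lift.{1,0} ε.card
          = Cardinal.lift.{1,0} (2 ^ ε.card) := by
        rw [Cardinal.lift_power, Cardinal.lift_two]
      have h3 : (2 : Cardinal) ^ ε.card ≤ 2 ^< μ :=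
        le_powerlt 2 (Cardinal.lt_ord.mp hε)
      calc #(Set (Iio ε)) = Cardinal.lift.{1,0} (2 ^ ε.card) := by rw [h1, h2]
        _ ≤ Cardinal.lift.{1,0} ((2:Cardinal) ^< μ) := Cardinal.lift_le.mpr h3
        _ < L := Cardinal.lift_lt.mpr hlam
    · intro s
      rcases isEmpty_or_nonempty {x // g' x = s} with he | hne
      · rw [Cardinal.mk_eq_zero]
        exact lt_of_lt_of_le (by simpa using aleph0_pos) hLreg.1
      · obtain ⟨⟨β, hβ⟩, hgβ⟩ := hne
        have hinj : ∃ f : {x // g' x = s} → ↥(H β ε), Function.Injective f := by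
          refine ⟨fun x => ⟨x.1.1, x.1.2.1, ?_⟩, ?_⟩
          · exact hg _ _ (by rw [show g x.1.1 = g' x.1 from rfl, x.2,
              ← hgβ])
          · intro a b hab
            have h2 := congrArg Subtype.val hab
            exact Subtype.ext (Subtype.ext h2)
        obtain ⟨f, hf⟩ := hinj
        exact lt_of_le_of_lt (Cardinal.mk_le_of_injective hf) hβ.2
  -- the bad set
  set Bad : Set Ordinal := ⋃ ε : Iio μ.ord, Badε ε with hBaddef
  have hBad : #Bad < L := by
    have h1 : #Bad ≤ Cardinal.sum (fun ε : Iio μ.ord => #(Badε ε.1)) :=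
      Cardinal.mk_iUnion_le_sum_mk
    refine lt_of_le_of_lt h1 (Cardinal.sum_lt_of_isRegular hLreg ?_ ?_)
    · rw [Ordinal.mk_Iio_ordinal, Cardinal.card_ord]
      exact Cardinal.lift_lt.mpr hmul
    · exact fun ε => badε_small ε.1 ε.2
  -- find a good α
  have hnotsub : ¬ (Iio lam.ord ⊆ Bad) := by
    intro h
    exact absurd (hIio ▸ Cardinal.mk_le_mk_of_subset h) hBad.not_ge
  obtain ⟨α, hα1, hα2⟩ := not_subset.mp hnotsub
  refine ⟨α, hα1, fun ε hε => ?_⟩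
  have hnotbad : ¬ (#(H α ε) < L) := by
    intro hlt
    exact hα2 (mem_iUnion.mpr ⟨⟨ε, hε⟩, ⟨hα1, hlt⟩⟩)
  have hle : #(H α ε) ≤ L := by
    refine le_trans (Cardinal.mk_le_mk_of_subset ?_) hIio.le
    exact fun β hβ => hβ.1
  exact le_antisymm hle (not_lt.mp hnotbad)
end

section
/- Let κ be an infinite cardinal and let F be a proper filter on κ⁺ such that F contains every final segment {β < κ⁺ : β ≥ γ} (for γ < κ⁺) and F is closed under diagonal intersections, i.e., for every sequence ⟨A_ε : ε < κ⁺⟩ of members of F the diagonal intersection Δ_{ε<κ⁺} A_ε = {β < κ⁺ : β ∈ A_ε for all ε < β} belongs to F. Assume 2^κ < 2^{κ⁺} and let λ be a cardinal with 2^κ < λ ≤ 2^{κ⁺}. Then every family {C_α : α < λ} of members of F contains a subfamily of cardinality κ⁺ whose intersection belongs to F. -/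
open Set Cardinal Classical

noncomputable def galvinSeq (good : Ordinal → Set Ordinal) : Ordinal → Ordinal :=
  Ordinal.lt_wf.fix fun ε ih =>
    if h : (good ε \ Set.range fun p : Set.Iio ε => ih p.1 p.2).Nonempty then h.some else 0

theorem galvinSeq_eq (good : Ordinal → Set Ordinal) (ε : Ordinal) :
    galvinSeq good ε =
      if h : (good ε \ Set.range fun p : Set.Iio ε => galvinSeq good p.1).Nonempty then
        h.some else 0 := by
  conv_lhs => rw [galvinSeq, WellFounded.fix_eq]
  rfl

universe u

theorem galvin_aux (κ : Cardinal.{u}) (hκ : ℵ₀ ≤ κ)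
    (F : Set (Set Ordinal))
    (hne : F.Nonempty)
    (hsub : ∀ S ∈ F, S ⊆ Iio (Order.succ κ).ord)
    (hup : ∀ S ∈ F, ∀ T, S ⊆ T → T ⊆ Iio (Order.succ κ).ord → T ∈ F)
    (hinter : ∀ S ∈ F, ∀ T ∈ F, S ∩ T ∈ F)
    (hproper : ∅ ∉ F)
    (hfinal : ∀ γ < (Order.succ κ).ord, {β : Ordinal | γ ≤ β ∧ β < (Order.succ κ).ord} ∈ F)
    (hdiag : ∀ A : Ordinal → Set Ordinal, (∀ ε < (Order.succ κ).ord, A ε ∈ F) →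
      {β : Ordinal | β < (Order.succ κ).ord ∧ ∀ ε < β, β ∈ A ε} ∈ F)
    (hpow : (2 : Cardinal) ^ κ < (2 : Cardinal) ^ Order.succ κ)
    (lam : Cardinal) (hlam1 : (2 : Cardinal) ^ κ < lam)
    (hlam2 : lam ≤ (2 : Cardinal) ^ Order.succ κ)
    (C : Ordinal → Set Ordinal) (hC : ∀ α < lam.ord, C α ∈ F) :
    ∃ ζ : Ordinal → Ordinal, (∀ ε < (Order.succ κ).ord, ζ ε < lam.ord) ∧
      Set.InjOn ζ (Iio (Order.succ κ).ord) ∧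
      (⋂ ε ∈ Iio (Order.succ κ).ord, C (ζ ε)) ∈ F := by
  classical
  set ν := (Order.succ κ).ord with hνdef
  set L : Cardinal.{u+1} := Cardinal.lift.{u+1} ((2 : Cardinal) ^ κ) with hLdef
  have hν0 : ℵ₀ ≤ Order.succ κ := hκ.trans (Order.le_succ κ)
  have hνlim : Order.IsSuccLimit ν := Cardinal.isSuccLimit_ord hν0
  have hcard : ∀ γ, γ < ν → γ.card ≤ κ := fun γ hγ =>
    Order.lt_succ_iff.1 (Cardinal.lt_ord.1 hγ)
  have h2κ : ℵ₀ ≤ (2 : Cardinal) ^ κ := hκ.trans (le_of_lt (Cardinal.cantor κ))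
  have h2κ' : ℵ₀ ≤ L := Cardinal.aleph0_le_lift.2 h2κ
  have hκL : Cardinal.lift.{u+1} κ ≤ L := Cardinal.lift_le.2 (le_of_lt (Cardinal.cantor κ))
  -- fibers
  set fib : Ordinal → Set Ordinal → Set Ordinal :=
    fun γ v => {β | β < lam.ord ∧ C β ∩ Iio γ = v} with hfibdef
  -- there is a rich index
  obtain ⟨α, hα, hrich⟩ :
      ∃ α < lam.ord, ∀ γ < ν, L < #(fib γ (C α ∩ Iio γ)) := by
    by_contra hcon
    push_neg at hcon
    have hsub1 : Iio lam.ord ⊆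
        ⋃ γ ∈ Iio ν, {α : Ordinal | α < lam.ord ∧ #(fib γ (C α ∩ Iio γ)) ≤ L} := by
      intro α hα
      obtain ⟨γ, hγ, hle⟩ := hcon α hα
      exact Set.mem_biUnion hγ ⟨hα, hle⟩
    have hS : ∀ γ ∈ Iio ν,
        #({α : Ordinal | α < lam.ord ∧ #(fib γ (C α ∩ Iio γ)) ≤ L}) ≤ L := by
      intro γ hγ
      have hsub2 : {α : Ordinal | α < lam.ord ∧ #(fib γ (C α ∩ Iio γ)) ≤ L} ⊆
          ⋃ v ∈ {v : Set Ordinal | v ⊆ Iio γ ∧ #(fib γ v) ≤ L}, fib γ v := by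
        rintro α ⟨h1, h2⟩
        exact Set.mem_biUnion ⟨Set.inter_subset_right, h2⟩ ⟨h1, rfl⟩
      refine (Cardinal.mk_le_mk_of_subset hsub2).trans ?_
      refine (Cardinal.mk_biUnion_le _ _).trans ?_
      have hV : #({v : Set Ordinal | v ⊆ Iio γ ∧ #(fib γ v) ≤ L}) ≤ L := by
        refine (Cardinal.mk_le_mk_of_subset
          (show {v : Set Ordinal | v ⊆ Iio γ ∧ #(fib γ v) ≤ L} ⊆ 𝒫 (Iio γ) from
            fun v hv => hv.1)).trans ?_
        rw [Cardinal.mk_powerset, Ordinal.mk_Iio_ordinal]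
        calc (2 : Cardinal.{u+1}) ^ Cardinal.lift.{u+1} γ.card
            ≤ (2 : Cardinal.{u+1}) ^ Cardinal.lift.{u+1} κ :=
              Cardinal.power_le_power_left two_ne_zero (Cardinal.lift_le.2 (hcard γ hγ))
          _ = L := by rw [hLdef, Cardinal.lift_power, Cardinal.lift_two]
      have hsup : ⨆ v : {v : Set Ordinal | v ⊆ Iio γ ∧ #(fib γ v) ≤ L}, #(fib γ v.1) ≤ L := by
        rcases isEmpty_or_nonempty ({v : Set Ordinal | v ⊆ Iio γ ∧ #(fib γ v) ≤ L} : Set _) with h | h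
        · rw [ciSup_of_empty]
          exact bot_le.trans (le_refl L) |>.trans (le_refl L)
        · exact ciSup_le' fun v => v.2.2
      calc #({v : Set Ordinal | v ⊆ Iio γ ∧ #(fib γ v) ≤ L}) *
            ⨆ v : {v : Set Ordinal | v ⊆ Iio γ ∧ #(fib γ v) ≤ L}, #(fib γ v.1)
          ≤ L * L := mul_le_mul' hV hsup
        _ = L := Cardinal.mul_eq_self h2κ'
    have hfinal' : Cardinal.lift.{u+1} lam ≤ L := by
      have h1 : #(Iio lam.ord) ≤
          #(⋃ γ ∈ Iio ν, {α : Ordinal | α < lam.ord ∧ #(fib γ (C α ∩ Iio γ)) ≤ L}) :=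
        Cardinal.mk_le_mk_of_subset hsub1
      have h2 := Cardinal.mk_biUnion_le
        (fun γ => {α : Ordinal | α < lam.ord ∧ #(fib γ (C α ∩ Iio γ)) ≤ L}) (Iio ν)
      have h3 : #(Iio ν) ≤ L := by
        rw [Ordinal.mk_Iio_ordinal, hνdef, Cardinal.card_ord]
        exact Cardinal.lift_le.2 (Order.succ_le_of_lt (Cardinal.cantor κ))
      have h4 : ⨆ γ : Iio ν,
          #({α : Ordinal | α < lam.ord ∧ #(fib γ.1 (C α ∩ Iio γ.1)) ≤ L}) ≤ L := by
        rcases isEmpty_or_nonempty (Iio ν) with h | h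
        · rw [ciSup_of_empty]; exact bot_le
        · exact ciSup_le' fun γ => hS γ.1 γ.2
      have h5 : #(Iio lam.ord) = Cardinal.lift.{u+1} lam := by
        rw [Ordinal.mk_Iio_ordinal, Cardinal.card_ord]
      rw [← h5]
      refine h1.trans (h2.trans ?_)
      calc #(Iio ν) * ⨆ γ : Iio ν,
            #({α : Ordinal | α < lam.ord ∧ #(fib γ.1 (C α ∩ Iio γ.1)) ≤ L})
          ≤ L * L := mul_le_mul' h3 h4
        _ = L := Cardinal.mul_eq_self h2κ'
    have : lam ≤ (2 : Cardinal) ^ κ := by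
      rw [← Cardinal.lift_le.{u+1}]; exact hfinal'
    exact absurd this (not_le.2 hlam1)
  -- construct the sequence
  set good : Ordinal → Set Ordinal :=
    fun ε => fib (Order.succ ε) (C α ∩ Iio (Order.succ ε)) with hgooddef
  set ζ : Ordinal → Ordinal := galvinSeq good with hζdef
  have hbig : ∀ ε < ν, L < #(good ε) := fun ε hε => hrich _ (hνlim.succ_lt hε)
  have hspec : ∀ ε < ν, ζ ε ∈ good ε ∧
      ζ ε ∉ Set.range fun p : Iio ε => ζ p.1 := by
    intro ε hε
    have hnem : (good ε \ Set.range fun p : Set.Iio ε => galvinSeq good p.1).Nonempty := by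
      rw [Set.nonempty_iff_ne_empty]
      intro h0
      have hsub' : good ε ⊆ Set.range fun p : Set.Iio ε => galvinSeq good p.1 :=
        Set.diff_eq_empty.1 h0
      have hle : #(good ε) ≤ Cardinal.lift.{u+1} ε.card := by
        refine (Cardinal.mk_le_mk_of_subset hsub').trans ?_
        refine Cardinal.mk_range_le.trans ?_
        rw [Ordinal.mk_Iio_ordinal]
      have : #(good ε) ≤ L :=
        hle.trans ((Cardinal.lift_le.2 (hcard ε hε)).trans hκL)
      exact absurd this (not_le.2 (hbig ε hε))
    have heq := galvinSeq_eq good ε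
    rw [dif_pos hnem] at heq
    rw [hζdef, heq]
    exact ⟨(hnem.some_mem).1, (hnem.some_mem).2⟩
  have hζlt : ∀ ε < ν, ζ ε < lam.ord := fun ε hε => ((hspec ε hε).1).1
  refine ⟨ζ, hζlt, ?_, ?_⟩
  · -- injectivity
    intro x hx y hy hxy
    by_contra hne'
    rcases Ne.lt_or_gt hne' with h | h
    · exact (hspec y hy).2 ⟨⟨x, h⟩, hxy⟩
    · exact (hspec x hx).2 ⟨⟨y, h⟩, hxy.symm⟩
  · -- intersection in F
    set Δ : Set Ordinal := {β : Ordinal | β < ν ∧ ∀ ε < β, β ∈ C (ζ ε)} with hΔdef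
    have hΔF : Δ ∈ F := hdiag (fun ε => C (ζ ε)) fun ε hε => hC _ (hζlt ε hε)
    have hSF : C α ∩ Δ ∈ F := hinter _ (hC α hα) _ hΔF
    have hsubset : C α ∩ Δ ⊆ ⋂ ε ∈ Iio ν, C (ζ ε) := by
      rintro β ⟨hβC, hβν, hβΔ⟩
      refine Set.mem_iInter₂.2 fun ε hε => ?_
      rcases lt_or_ge ε β with h | h
      · exact hβΔ ε h
      · have hmem := (hspec ε hε).1
        have : β ∈ C α ∩ Iio (Order.succ ε) := ⟨hβC, Order.lt_succ_iff.2 h⟩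
        rw [← hmem.2] at this
        exact this.1
    have hTsub : (⋂ ε ∈ Iio ν, C (ζ ε)) ⊆ Iio ν := by
      intro x hx
      have h0ν : (0 : Ordinal) < ν := hνlim.pos
      exact hsub _ (hC _ (hζlt 0 h0ν)) (Set.mem_iInter₂.1 hx 0 h0ν)
    exact hup _ hSF _ hsubset hTsub

/-- Galvin's property for an arbitrary normal filter on `κ⁺`: if `F` is a proper filter
on `κ⁺` containing all final segments and closed under diagonal intersections, and
`2 ^ κ < lam ≤ 2 ^ κ⁺`, then every family of `lam` members of `F` contains a subfamily
of cardinality `κ⁺` whose intersection belongs to `F`. -/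
theorem galvin_for_normal_filter (κ : Cardinal) (hκ : ℵ₀ ≤ κ)
    (F : Set (Set Ordinal))
    (hne : F.Nonempty)
    (hsub : ∀ S ∈ F, S ⊆ Iio (Order.succ κ).ord)
    (hup : ∀ S ∈ F, ∀ T, S ⊆ T → T ⊆ Iio (Order.succ κ).ord → T ∈ F)
    (hinter : ∀ S ∈ F, ∀ T ∈ F, S ∩ T ∈ F)
    (hproper : ∅ ∉ F)
    (hfinal : ∀ γ < (Order.succ κ).ord, {β : Ordinal | γ ≤ β ∧ β < (Order.succ κ).ord} ∈ F)
    (hdiag : ∀ A : Ordinal → Set Ordinal, (∀ ε < (Order.succ κ).ord, A ε ∈ F) →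
      {β : Ordinal | β < (Order.succ κ).ord ∧ ∀ ε < β, β ∈ A ε} ∈ F)
    (hpow : (2 : Cardinal) ^ κ < (2 : Cardinal) ^ Order.succ κ)
    (lam : Cardinal) (hlam1 : (2 : Cardinal) ^ κ < lam)
    (hlam2 : lam ≤ (2 : Cardinal) ^ Order.succ κ)
    (C : Ordinal → Set Ordinal) (hC : ∀ α < lam.ord, C α ∈ F) :
    ∃ ζ : Ordinal → Ordinal, (∀ ε < (Order.succ κ).ord, ζ ε < lam.ord) ∧
      Set.InjOn ζ (Iio (Order.succ κ).ord) ∧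
      (⋂ ε ∈ Iio (Order.succ κ).ord, C (ζ ε)) ∈ F := by
  exact galvin_aux κ hκ F hne hsub hup hinter hproper hfinal hdiag hpow lam hlam1 hlam2 C hC
end

section
/- Let κ be a weakly inaccessible cardinal. If the weak diamond principle Φ_κ holds, then 2^{<κ} < 2^κ. -/
open Set Cardinal

/-- For a weakly inaccessible cardinal `κ`, the weak diamond `Φ_κ` implies
`2 ^ (< κ) < 2 ^ κ`. -/
theorem weakDiamond_inaccessible_implies_lt (κ : Cardinal) (hreg : κ.IsRegular)
    (huncount : ℵ₀ < κ) (hlimit : ∀ θ < κ, Order.succ θ < κ)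
    (hwd : weakDiamond κ.ord) :
    (2 : Cardinal) ^< κ < (2 : Cardinal) ^ κ := by
  by_contra hcon
  rw [not_lt] at hcon
  haveI iθ : ∀ o : Ordinal, IsWellOrder o.ToType (· < ·) := fun _ => isWellOrder_lt
  -- Step 1: find θ < κ with 2 ^ κ ≤ 2 ^ θ
  obtain ⟨θ, hθκ, hle⟩ : ∃ θ < κ, (2 : Cardinal) ^ κ ≤ 2 ^ θ := by
    by_contra hθ
    push_neg at hθ
    set f : κ.ord.ToType → Cardinal :=
      fun i => 2 ^ (Ordinal.typein (α := κ.ord.ToType) (· < ·) i).card with hf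
    have hcof : #(κ.ord.ToType) < ((2 : Cardinal) ^ κ).ord.cof := by
      rw [Cardinal.mk_toType, Cardinal.card_ord]
      exact Cardinal.lt_cof_power huncount.le one_lt_two
    have hlt : ∀ i, f i < 2 ^ κ := by
      intro i
      apply hθ
      rw [← Cardinal.lt_ord]
      exact Ordinal.typein_lt_self i
    have hsup : iSup f < 2 ^ κ := Ordinal.iSup_lt hcof hlt
    have hple : (2 : Cardinal) ^< κ ≤ iSup f := by
      rw [Cardinal.powerlt_le]
      intro x hx
      have hx' : x.ord < Ordinal.type (α := κ.ord.ToType) (· < ·) := by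
        rw [Ordinal.type_toType]; exact Cardinal.ord_lt_ord.2 hx
      obtain ⟨i, hi⟩ := Ordinal.typein_surj _ hx'
      have : f i = 2 ^ x := by rw [hf]; simp [hi, Cardinal.card_ord]
      rw [← this]
      exact le_ciSup (Cardinal.bddAbove_range _) i
    exact absurd (hcon.trans hple) hsup.not_ge
  -- Step 2: get a surjection from short sequences onto long sequences
  have hmk : #(κ.ord.ToType → Bool) ≤ #(θ.ord.ToType → Bool) := by
    rw [Cardinal.mk_arrow, Cardinal.mk_arrow, Cardinal.mk_toType, Cardinal.mk_toType,
      Cardinal.card_ord, Cardinal.card_ord, Cardinal.mk_bool, Cardinal.lift_two]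
    simpa using hle
  obtain ⟨e⟩ := (Cardinal.le_def _ _).1 hmk
  have hsurj : Function.Surjective (Function.invFun e) :=
    Function.invFun_surjective e.injective
  set E : (θ.ord.ToType → Bool) → (κ.ord.ToType → Bool) := Function.invFun e with hE
  have htyθ : Ordinal.type (α := θ.ord.ToType) (· < ·) = θ.ord := Ordinal.type_toType _
  have htyκ : Ordinal.type (α := κ.ord.ToType) (· < ·) = κ.ord := Ordinal.type_toType _
  -- the colouring
  set F : Ordinal → (Ordinal → Bool) → Bool := fun α p =>
    ! (if h : α < κ.ord then
        E (fun a => p (Ordinal.typein (· < ·) a)) (Ordinal.enum (· < ·) ⟨α, lt_of_lt_of_eq h htyκ.symm⟩)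
      else false) with hF
  obtain ⟨g, hg⟩ := hwd F
  -- choose s coding g, and f extending s by false
  obtain ⟨s, hs⟩ := hsurj (fun b => g (Ordinal.typein (· < ·) b))
  set f : Ordinal → Bool := fun β =>
    if h : β < θ.ord then s (Ordinal.enum (· < ·) ⟨β, lt_of_lt_of_eq h htyθ.symm⟩) else false with hfdef
  -- the club of ordinals in [θ.ord, κ.ord)
  have hθκo : θ.ord < κ.ord := Cardinal.ord_lt_ord.2 hθκ
  have hclub : isClubIn κ.ord {x | θ.ord ≤ x ∧ x < κ.ord} := by
    refine ⟨fun x hx => hx.2, ?_, ?_⟩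
    · intro x hx hx0 hlim
      obtain ⟨z, hzC, _, hzx⟩ := hlim 0 (pos_iff_ne_zero.2 hx0)
      exact ⟨hzC.1.trans hzx.le, hx⟩
    · intro x hx
      exact ⟨max x θ.ord, ⟨le_max_right _ _, max_lt hx hθκo⟩, le_max_left _ _,
        max_lt hx hθκo⟩
  obtain ⟨α, hαS, hαθ, hακ⟩ := hg f _ hclub
  -- compute F α (restrictSeq f α)
  have hkey : F α (restrictSeq f α) = ! g α := by
    rw [hF]
    simp only [hακ, dif_pos]
    have hres : (fun a : θ.ord.ToType => restrictSeq f α (Ordinal.typein (· < ·) a)) = s := by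
      funext a
      have h1 : Ordinal.typein (α := θ.ord.ToType) (· < ·) a < θ.ord :=
        Ordinal.typein_lt_self a
      have h2 : Ordinal.typein (α := θ.ord.ToType) (· < ·) a < α := lt_of_lt_of_le h1 hαθ
      rw [restrictSeq]
      simp only [h2, if_pos]
      rw [hfdef]
      simp only [h1, dif_pos]
      exact congrArg s (Ordinal.enum_typein (· < ·) a)
    rw [hres, hs]
    simp only [Ordinal.typein_enum]
  have : (!g α) = g α := hkey ▸ hαS.2
  simp at this
end
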